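/- Let J ⊆ (ℝ,≤)² be a connected and convex subposet and M:J→vect_F a functor such that M(i≤j) is an isomorphism for all i≤j in J. Then for any a≤b in J and any zigzag path p: a−x₁−⋯−xₙ−b in J, the composite M(a⇝b along p) equals M(a≤b). -/

import Mathlib

/-- A persistence module over a preorder `P` with coefficients in a field `F`:
a functor `(P,≤) → Vect_F`, given by vector spaces `V p` and linear maps
`map : i ≤ j → (V i →ₗ[F] V j)` satisfying the functoriality equations. -/
structure PersistenceModule (F : Type) [Field F] (P : Type) [Preorder P] where
  V : P → Type
  [addCommGroup : ∀ p, AddCommGroup (V p)]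
  [module : ∀ p, Module F (V p)]
  map : ∀ {i j : P}, i ≤ j → (V i →ₗ[F] V j)
  map_id : ∀ i : P, map (le_refl i) = LinearMap.id
  map_comp : ∀ {i j k : P} (hij : i ≤ j) (hjk : j ≤ k),
    (map hjk).comp (map hij) = map (hij.trans hjk)

attribute [instance] PersistenceModule.addCommGroup PersistenceModule.module

/-- A zigzag path `a - x₁ - ⋯ - xₙ - b` in a preorder, where each consecutive
pair of points is comparable. -/
inductive Zigzag (P : Type) [Preorder P] : P → P → Type
  | single (a : P) : Zigzag P a a
  | consLe {a b c : P} (h : a ≤ b) (p : Zigzag P b c) : Zigzag P a c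
  | consGe {a b c : P} (h : b ≤ a) (p : Zigzag P b c) : Zigzag P a c

/-- Convexity of a subset of a poset: `i ≤ j ≤ k` with `i, k ∈ J` implies `j ∈ J`. -/
def PosetConvex {P : Type} [Preorder P] (J : Set P) : Prop :=
  ∀ i ∈ J, ∀ k ∈ J, ∀ j : P, i ≤ j → j ≤ k → j ∈ J

/-- Connectedness: any two points of `J` are joined by a finite zigzag path inside `J`. -/
def ZigzagConnected {P : Type} [Preorder P] (J : Set P) : Prop :=
  ∀ a b : J, Nonempty (Zigzag (↥J) a b)

/-- The composite `M(a ⇝ b)` along a zigzag path, using `M̂(i,j) = M(i≤j)` on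
good arrows and `M̂(i,j) = M(j≤i)⁻¹` on bad arrows. -/
noncomputable def zigzagMap {F : Type} [Field F] {P : Type} [Preorder P]
    (M : PersistenceModule F P)
    (hiso : ∀ (i j : P) (h : i ≤ j), Function.Bijective (M.map h)) :
    {a b : P} → Zigzag P a b → (M.V a →ₗ[F] M.V b)
  | _, _, .single _ => LinearMap.id
  | _, _, .consLe h p => (zigzagMap M hiso p).comp (M.map h)
  | _, _, .consGe h p =>
      (zigzagMap M hiso p).comp
        ((LinearEquiv.ofBijective (M.map h) (hiso _ _ h)).symm.toLinearMap)


/-! Since all structure maps are invertible, the composite along a zigzag does not change when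
two consecutive steps in the same direction are merged, when a peak or a valley whose two
neighbours are comparable is cut out, or when the bottom `w` of a valley `u ≥ w ≤ v` is raised
to `u ⊓ v`, which lies in `J` by convexity. The first two moves shorten the path, so it suffices
to find one of them in every path of length at least two from `a` to `b ≥ a`.

The only obstruction is a valley `P ≥ w ≤ Q` at the start of the path whose meet `P ⊓ Q` is not
above `a`. Then some coordinate `π` has `π Q < π a ≤ π b`, so the peaks `Q = Q₀, Q₁, …` that
follow cannot keep decreasing under `π` until `b`. At the first `k` with `π Qₖ ≤ π Qₖ₊₁`, the
meets of `Qₖ` with both neighbouring peaks have `π`-coordinate `π Qₖ`; two points of the plane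
sharing a coordinate are comparable, so after raising both valleys to these meets the peak `Qₖ`
is cut out. -/

namespace PersistenceModule

variable {F : Type} [Field F] {P : Type} [Preorder P] (M : PersistenceModule F P)
  (hiso : ∀ (i j : P) (h : i ≤ j), Function.Bijective (M.map h))

noncomputable def equiv {i j : P} (h : i ≤ j) : M.V i ≃ₗ[F] M.V j :=
  LinearEquiv.ofBijective (M.map h) (hiso i j h)

@[simp] lemma equiv_apply {i j : P} (h : i ≤ j) (x : M.V i) :
    M.equiv hiso h x = M.map h x := rfl

@[simp] lemma equiv_symm_map {i j : P} (h : i ≤ j) (x : M.V i) :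
    (M.equiv hiso h).symm (M.map h x) = x :=
  (M.equiv hiso h).symm_apply_apply x

@[simp] lemma map_equiv_symm {i j : P} (h : i ≤ j) (x : M.V j) :
    M.map h ((M.equiv hiso h).symm x) = x :=
  (M.equiv hiso h).apply_symm_apply x

lemma map_map {i j k : P} (hij : i ≤ j) (hjk : j ≤ k) (x : M.V i) :
    M.map hjk (M.map hij x) = M.map (hij.trans hjk) x :=
  LinearMap.congr_fun (M.map_comp hij hjk) x

lemma equiv_symm_equiv_symm {i j k : P} (hij : i ≤ j) (hjk : j ≤ k) (x : M.V k) :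
    (M.equiv hiso hij).symm ((M.equiv hiso hjk).symm x) = (M.equiv hiso (hij.trans hjk)).symm x := by
  rw [LinearEquiv.eq_symm_apply, equiv_apply, ← M.map_map hij hjk]
  simp

lemma equiv_symm_map_trans {i j k : P} (hij : i ≤ j) (hjk : j ≤ k) (x : M.V i) :
    (M.equiv hiso hjk).symm (M.map (hij.trans hjk) x) = M.map hij x := by
  rw [← M.map_map hij hjk, equiv_symm_map]

lemma map_trans_equiv_symm {i j k : P} (hij : i ≤ j) (hjk : j ≤ k) (x : M.V j) :
    M.map (hij.trans hjk) ((M.equiv hiso hij).symm x) = M.map hjk x := by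
  rw [← M.map_map hij hjk, map_equiv_symm]

lemma equiv_trans_symm_map {i j k : P} (hij : i ≤ j) (hjk : j ≤ k) (x : M.V j) :
    (M.equiv hiso (hij.trans hjk)).symm (M.map hjk x) = (M.equiv hiso hij).symm x := by
  rw [← M.equiv_symm_equiv_symm hiso hij hjk, equiv_symm_map]

end PersistenceModule

namespace Zigzag

variable {P : Type} [Preorder P]

def length : {a b : P} → Zigzag P a b → ℕ
  | _, _, .single _ => 0
  | _, _, .consLe _ p => p.length + 1
  | _, _, .consGe _ p => p.length + 1

end Zigzag

section Preorder

variable {F : Type} [Field F] {P : Type} [Preorder P] (M : PersistenceModule F P)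
  (hiso : ∀ (i j : P) (h : i ≤ j), Function.Bijective (M.map h))

@[simp] lemma zigzagMap_single (a : P) : zigzagMap M hiso (.single a) = LinearMap.id := rfl

@[simp] lemma zigzagMap_consLe {a x b : P} (h : a ≤ x) (p : Zigzag P x b) :
    zigzagMap M hiso (.consLe h p) = zigzagMap M hiso p ∘ₗ M.map h := rfl

@[simp] lemma zigzagMap_consGe {a x b : P} (h : x ≤ a) (p : Zigzag P x b) :
    zigzagMap M hiso (.consGe h p) = zigzagMap M hiso p ∘ₗ (M.equiv hiso h).symm.toLinearMap :=
  rfl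

lemma zigzagMap_consLe_congr {a x b : P} (h : a ≤ x) {p q : Zigzag P x b}
    (hpq : zigzagMap M hiso p = zigzagMap M hiso q) :
    zigzagMap M hiso (.consLe h p) = zigzagMap M hiso (.consLe h q) := by
  simp only [zigzagMap_consLe, hpq]

lemma zigzagMap_consGe_congr {a x b : P} (h : x ≤ a) {p q : Zigzag P x b}
    (hpq : zigzagMap M hiso p = zigzagMap M hiso q) :
    zigzagMap M hiso (.consGe h p) = zigzagMap M hiso (.consGe h q) := by
  simp only [zigzagMap_consGe, hpq]

lemma zigzagMap_consGe_consLe_eq {u v w m b : P} (hwm : w ≤ m) (hmu : m ≤ u) (hmv : m ≤ v)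
    (p : Zigzag P v b) :
    zigzagMap M hiso (.consGe (hwm.trans hmu) (.consLe (hwm.trans hmv) p)) =
      zigzagMap M hiso (.consGe hmu (.consLe hmv p)) := by
  ext x
  simp [← M.equiv_symm_equiv_symm hiso hwm hmu, ← M.map_map hwm hmv]

lemma zigzagMap_eq_map_of_length_le_one :
    ∀ {a b : P} (hab : a ≤ b) (p : Zigzag P a b), p.length ≤ 1 → zigzagMap M hiso p = M.map hab
  | a, _, _, .single _, _ => (M.map_id a).symm
  | _, _, _, .consLe _ (.single _), _ => rfl
  | _, _, hab, .consGe hba (.single _), _ => by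
    ext x
    simp [LinearEquiv.symm_apply_eq, M.map_map hab hba, M.map_id]
  | _, _, _, .consLe _ (.consLe _ _), hp | _, _, _, .consLe _ (.consGe _ _), hp
  | _, _, _, .consGe _ (.consLe _ _), hp | _, _, _, .consGe _ (.consGe _ _), hp => by
    simp [Zigzag.length] at hp

def Shortenable {a b : P} (p : Zigzag P a b) : Prop :=
  ∃ s : Zigzag P a b, s.length < p.length ∧ zigzagMap M hiso s = zigzagMap M hiso p

variable {M hiso}

lemma Shortenable.consLe {a x b : P} (h : a ≤ x) {p : Zigzag P x b}
    (hp : Shortenable M hiso p) : Shortenable M hiso (.consLe h p) :=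
  let ⟨s, hlen, hs⟩ := hp
  ⟨.consLe h s, by simpa [Zigzag.length], zigzagMap_consLe_congr M hiso h hs⟩

lemma Shortenable.consGe {a x b : P} (h : x ≤ a) {p : Zigzag P x b}
    (hp : Shortenable M hiso p) : Shortenable M hiso (.consGe h p) :=
  let ⟨s, hlen, hs⟩ := hp
  ⟨.consGe h s, by simpa [Zigzag.length], zigzagMap_consGe_congr M hiso h hs⟩

lemma Shortenable.of_map_eq {a b : P} {p q : Zigzag P a b} (hp : Shortenable M hiso p)
    (hlen : p.length = q.length) (hpq : zigzagMap M hiso p = zigzagMap M hiso q) :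
    Shortenable M hiso q :=
  let ⟨s, hs, hsp⟩ := hp
  ⟨s, hlen ▸ hs, hsp.trans hpq⟩

variable (M hiso)

lemma shortenable_consLe_consLe {a x y b : P} (hax : a ≤ x) (hxy : x ≤ y) (p : Zigzag P y b) :
    Shortenable M hiso (.consLe hax (.consLe hxy p)) :=
  ⟨.consLe (hax.trans hxy) p, by simp [Zigzag.length], by ext; simp [M.map_map]⟩

lemma shortenable_consGe_consGe {a x y b : P} (hxa : x ≤ a) (hyx : y ≤ x) (p : Zigzag P y b) :
    Shortenable M hiso (.consGe hxa (.consGe hyx p)) :=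
  ⟨.consGe (hyx.trans hxa) p, by simp [Zigzag.length], by ext; simp [M.equiv_symm_equiv_symm]⟩

lemma shortenable_consLe_consGe {u v w b : P} (huw : u ≤ w) (hvw : v ≤ w) (p : Zigzag P v b)
    (huv : u ≤ v ∨ v ≤ u) : Shortenable M hiso (.consLe huw (.consGe hvw p)) := by
  rcases huv with huv | hvu
  · refine ⟨.consLe huv p, by simp [Zigzag.length], ?_⟩
    ext
    simp [M.equiv_symm_map_trans hiso huv hvw]
  · refine ⟨.consGe hvu p, by simp [Zigzag.length], ?_⟩
    ext
    simp [M.equiv_trans_symm_map hiso hvu huw]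

lemma shortenable_consGe_consLe_of_le {u v w b : P} (hwu : w ≤ u) (hwv : w ≤ v) (p : Zigzag P v b)
    (huv : u ≤ v) : Shortenable M hiso (.consGe hwu (.consLe hwv p)) := by
  refine ⟨.consLe huv p, by simp [Zigzag.length], ?_⟩
  ext
  simp [M.map_trans_equiv_symm hiso hwu huv]

end Preorder

lemma PosetConvex.exists_coe_eq_inf {L : Type} [Lattice L] {J : Set L} (hconv : PosetConvex J)
    {w u v : J} (hwu : w ≤ u) (hwv : w ≤ v) : ∃ m : J, w ≤ m ∧ m ≤ u ∧ m ≤ v ∧ (m : L) = (u : L) ⊓ v :=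
  ⟨⟨u ⊓ v, hconv w w.2 u u.2 _ (le_inf hwu hwv) inf_le_left⟩,
    le_inf hwu hwv, inf_le_left, inf_le_right, rfl⟩

section Lattice

variable {F : Type} [Field F] {L α : Type} [Lattice L] [LinearOrder α] {J : Set L}
  (M : PersistenceModule F J) (hiso : ∀ (i j : J) (h : i ≤ j), Function.Bijective (M.map h))
  (hconv : PosetConvex J) (π : InfHom L α) (hfib : ∀ u v : L, π u = π v → u ≤ v ∨ v ≤ u)
include hconv hfib

lemma shortenable_of_coord_le {P Q R w w' b : J} (hwP : w ≤ P) (hwQ : w ≤ Q) (hw'Q : w' ≤ Q)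
    (hw'R : w' ≤ R) (q : Zigzag J R b) (hQP : π Q ≤ π P) (hQR : π Q ≤ π R) :
    Shortenable M hiso (.consGe hwP (.consLe hwQ (.consGe hw'Q (.consLe hw'R q)))) := by
  obtain ⟨m, hwm, hmP, hmQ, hm⟩ := hconv.exists_coe_eq_inf hwP hwQ
  obtain ⟨m', hw'm', hm'Q, hm'R, hm'⟩ := hconv.exists_coe_eq_inf hw'Q hw'R
  have hlevel : π m = π m' := by
    rw [hm, hm', map_inf, map_inf, inf_eq_right.2 hQP, inf_eq_left.2 hQR]
  refine ((shortenable_consLe_consGe M hiso hmQ hm'Q (.consLe hm'R q) (hfib _ _ hlevel)).consGe hmP).of_map_eq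
    (by simp [Zigzag.length]) ?_
  rw [zigzagMap_consGe_consLe_eq M hiso hwm hmP hmQ]
  exact zigzagMap_consGe_congr M hiso _ (zigzagMap_consLe_congr M hiso _
    (zigzagMap_consGe_consLe_eq M hiso hw'm' hm'Q hm'R q).symm)

theorem shortenable_of_coord_lt {b : J} {t : α} (htb : t ≤ π b) :
    ∀ {P Q w : J} (hwP : w ≤ P) (hwQ : w ≤ Q) (q : Zigzag J Q b), π Q ≤ π P → π Q < t →
      Shortenable M hiso (.consGe hwP (.consLe hwQ q))
  | _, _, _, _, _, .single _, _, hQt => absurd htb hQt.not_ge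
  | _, _, _, hwP, hwQ, .consLe hQR q, _, _ => (shortenable_consLe_consLe M hiso hwQ hQR q).consGe hwP
  | _, _, _, _, _, .consGe hbQ (.single _), _, hQt =>
    absurd (htb.trans (OrderHomClass.mono π hbQ)) hQt.not_ge
  | _, _, _, hwP, hwQ, .consGe hxQ (.consGe hyx q), _, _ =>
    ((shortenable_consGe_consGe M hiso hxQ hyx q).consLe hwQ).consGe hwP
  | _, _, _, hwP, hwQ, .consGe hw'Q (.consLe (b := R) hw'R q), hQP, hQt => by
    rcases lt_or_ge (π R) (π _) with hRQ | hQR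
    · exact ((shortenable_of_coord_lt htb hw'Q hw'R q hRQ.le (hRQ.trans hQt)).consLe hwQ).consGe hwP
    · exact shortenable_of_coord_le M hiso hconv π hfib hwP hwQ hw'Q hw'R q hQP hQR

lemma shortenable_of_coord_inf_lt {a b P Q w : J} (hab : a ≤ b) (haP : a ≤ P) (hwP : w ≤ P)
    (hwQ : w ≤ Q) (q : Zigzag J Q b) (h : π ((P : L) ⊓ Q) < π a) :
    Shortenable M hiso (.consGe hwP (.consLe hwQ q)) := by
  have hPa : π a ≤ π P := OrderHomClass.mono π haP
  have hQa : π Q < π a := by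
    rw [map_inf, inf_lt_iff] at h
    exact h.resolve_left hPa.not_gt
  exact shortenable_of_coord_lt M hiso hconv π hfib (OrderHomClass.mono π hab) hwP hwQ q
    (hQa.le.trans hPa) hQa

end Lattice

section Prod

variable {F : Type} [Field F] {α β : Type} [LinearOrder α] [LinearOrder β] {J : Set (α × β)}
  (M : PersistenceModule F J) (hiso : ∀ (i j : J) (h : i ≤ j), Function.Bijective (M.map h))
  (hconv : PosetConvex J)
include hconv

lemma shortenable_of_not_le_inf {a b P Q w : J} (hab : a ≤ b) (haP : a ≤ P) (hwP : w ≤ P)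
    (hwQ : w ≤ Q) (q : Zigzag J Q b) (h : ¬ (a : α × β) ≤ (P : α × β) ⊓ Q) :
    Shortenable M hiso (.consGe hwP (.consLe hwQ q)) := by
  simp only [Prod.le_def, not_and_or, not_le] at h
  rcases h with h | h
  · exact shortenable_of_coord_inf_lt M hiso hconv LatticeHom.fst.toInfHom
      (fun u v huv => (le_total u.2 v.2).imp (fun h => ⟨huv.le, h⟩) (fun h => ⟨huv.ge, h⟩))
      hab haP hwP hwQ q h
  · exact shortenable_of_coord_inf_lt M hiso hconv LatticeHom.snd.toInfHom
      (fun u v huv => (le_total u.1 v.1).imp (fun h => ⟨h, huv.le⟩) (fun h => ⟨h, huv.ge⟩))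
      hab haP hwP hwQ q h

theorem shortenable_of_le {a b : J} (hab : a ≤ b) :
    ∀ p : Zigzag J a b, 2 ≤ p.length → Shortenable M hiso p
  | .consLe hax (.consLe hxy p), _ => shortenable_consLe_consLe M hiso hax hxy p
  | .consLe haP (.consGe hbP (.single _)), _ => shortenable_consLe_consGe M hiso haP hbP _ (.inl hab)
  | .consLe haP (.consGe hxP (.consGe hyx p)), _ =>
    (shortenable_consGe_consGe M hiso hxP hyx p).consLe haP
  | .consLe (b := P) haP (.consGe hwP (.consLe (b := Q) hwQ q)), _ => by
    by_cases h : (a : α × β) ≤ (P : α × β) ⊓ Q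
    · obtain ⟨m, hwm, hmP, hmQ, hm⟩ := hconv.exists_coe_eq_inf hwP hwQ
      have ham : a ≤ m := show (a : α × β) ≤ m from hm ▸ h
      exact (shortenable_consLe_consGe M hiso haP hmP _ (.inl ham)).of_map_eq rfl
        (zigzagMap_consLe_congr M hiso haP (zigzagMap_consGe_consLe_eq M hiso hwm hmP hmQ q).symm)
    · exact (shortenable_of_not_le_inf M hiso hconv hab haP hwP hwQ q h).consLe haP
  | .consGe hxa (.consGe hyx p), _ => shortenable_consGe_consGe M hiso hxa hyx p
  | .consGe hwa (.consLe (b := Q) hwQ q), _ => by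
    by_cases h : a ≤ Q
    · exact shortenable_consGe_consLe_of_le M hiso hwa hwQ q h
    · exact shortenable_of_not_le_inf M hiso hconv hab le_rfl hwa hwQ q
        fun h' => h (h'.trans inf_le_right)
  | .single _, hp | .consLe _ (.single _), hp | .consGe _ (.single _), hp => by
    simp [Zigzag.length] at hp

theorem zigzagMap_eq_map {a b : J} (hab : a ≤ b) (p : Zigzag J a b) :
    zigzagMap M hiso p = M.map hab := by
  rcases le_or_gt p.length 1 with hp | hp
  · exact zigzagMap_eq_map_of_length_le_one M hiso hab p hp
  · obtain ⟨s, hs, hsp⟩ := shortenable_of_le M hiso hconv hab p hp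
    rw [← hsp, zigzagMap_eq_map hab s]
termination_by p.length

end Prod

theorem statement1 (F : Type) [Field F] (J : Set (ℝ × ℝ))
    (hconv : PosetConvex J)
    (M : PersistenceModule F ↥J)
    (hiso : ∀ (i j : ↥J) (h : i ≤ j), Function.Bijective (M.map h))
    (a b : ↥J) (hab : a ≤ b) (p : Zigzag (↥J) a b) :
    zigzagMap M hiso p = M.map hab :=
  zigzagMap_eq_map M hiso hconv hab p
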